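/- arXiv:2507.07216 — 2 statements merged into one kernel-verified Lean document; each statement's English description precedes it below -/
import Mathlib

section
/- Let (Ω, P) be a finite probability space with binary random variables ỹ, y* : Ω → {0,1}, with all four events {y*=r, ỹ=c} having positive probability. Define LB = Σ_r P(ỹ=1|y*=r)·P(y*=r|ỹ=1) and UB = Σ_r P(ỹ=1|y*=r)·P(y*=r|ỹ=0). If the noise rates satisfy P(ỹ=0|y*=1) < 1/2 and P(ỹ=1|y*=0) < 1/2, then UB ≤ LB. -/
open Finset

noncomputable def Pr {Ω : Type} [Fintype Ω] (w : Ω → ℝ) (A : Set Ω) : ℝ :=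
  ∑ ω, A.indicator w ω

noncomputable def cPr {Ω : Type} [Fintype Ω] (w : Ω → ℝ) (A B : Set Ω) : ℝ :=
  Pr w (A ∩ B) / Pr w B

noncomputable def cExp {Ω : Type} [Fintype Ω] (w : Ω → ℝ) (f : Ω → ℝ) (B : Set Ω) : ℝ :=
  (∑ ω, B.indicator (fun ω' => w ω' * f ω') ω) / Pr w B

/-!
`UB` and `LB` are the means of the label-flip profile `r ↦ P(ỹ = 1 | y* = r)` under the
distributions of `y*` given `ỹ = 0` and given `ỹ = 1`. Noise rates below one half make the
profile increasing (`P(ỹ = 1 | y* = 0) < 1/2 < P(ỹ = 1 | y* = 1)`) and make the diagonal cells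
of the joint table of `(y*, ỹ)` dominate the off-diagonal ones, so `P(y* = 1 | ỹ = 0) ≤
P(y* = 1 | ỹ = 1)`. An increasing function has a larger mean under the dominating distribution.
-/

lemma two_point_mean_le {x₀ x₁ p₀ p₁ q₀ q₁ : ℝ} (hp : p₀ + p₁ = 1) (hq : q₀ + q₁ = 1)
    (hx : x₀ ≤ x₁) (hpq : p₁ ≤ q₁) :
    x₀ * p₀ + x₁ * p₁ ≤ x₀ * q₀ + x₁ * q₁ := by
  have hdiff : x₀ * q₀ + x₁ * q₁ - (x₀ * p₀ + x₁ * p₁) = (x₁ - x₀) * (q₁ - p₁) := by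
    linear_combination x₀ * hq - x₀ * hp
  linarith [mul_nonneg (sub_nonneg.2 hx) (sub_nonneg.2 hpq)]

lemma div_add_le_div_add {a b c d : ℝ} (ha : 0 < a) (hd : 0 < d) (hb : 0 ≤ b) (hc : 0 ≤ c)
    (hba : b ≤ a) (hcd : c ≤ d) :
    c / (c + a) ≤ d / (d + b) := by
  rw [div_le_div_iff₀ (by positivity) (by positivity)]
  nlinarith [mul_le_mul hcd hba hb hd.le]

lemma compl_setOf_fin_two {Ω : Type} (f : Ω → Fin 2) {i j : Fin 2} (hij : i ≠ j) :
    {ω | f ω = i}ᶜ = {ω | f ω = j} := by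
  ext ω
  simp only [Set.mem_compl_iff, Set.mem_ofPred_eq]
  omega

section Pr

variable {Ω : Type} [Fintype Ω] (w : Ω → ℝ)

lemma Pr_nonneg (hw : ∀ ω, 0 ≤ w ω) (A : Set Ω) : 0 ≤ Pr w A :=
  Finset.sum_nonneg fun ω _ => Set.indicator_nonneg (fun ω _ => hw ω) ω

lemma Pr_mono (hw : ∀ ω, 0 ≤ w ω) {A B : Set Ω} (h : A ⊆ B) : Pr w A ≤ Pr w B :=
  Finset.sum_le_sum fun ω _ => Set.indicator_le_indicator_of_subset h hw ω

lemma Pr_inter_add_compl_inter (A B : Set Ω) : Pr w (A ∩ B) + Pr w (Aᶜ ∩ B) = Pr w B := by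
  simp only [Pr, ← Set.indicator_indicator, ← Finset.sum_add_distrib]
  exact Finset.sum_congr rfl fun ω _ => congr_fun (Set.indicator_self_add_compl A _) ω

lemma cPr_add_cPr_compl (A B : Set Ω) (hB : Pr w B ≠ 0) : cPr w A B + cPr w Aᶜ B = 1 := by
  rw [cPr, cPr, ← add_div, Pr_inter_add_compl_inter, div_self hB]

lemma Pr_inter_lt_compl_inter_of_cPr_lt_half {A B : Set Ω} (hB : 0 < Pr w B)
    (h : cPr w A B < 1 / 2) : Pr w (A ∩ B) < Pr w (Aᶜ ∩ B) := by
  rw [cPr, div_lt_iff₀ hB, ← Pr_inter_add_compl_inter w A B] at h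
  linarith

lemma cPr_compl_le_cPr_of_cPr_lt_half (hw : ∀ ω, 0 ≤ w ω) {A B : Set Ω}
    (hA : 0 < Pr w A) (hAc : 0 < Pr w Aᶜ)
    (h : cPr w Bᶜ A < 1 / 2) (hc : cPr w B Aᶜ < 1 / 2) : cPr w A Bᶜ ≤ cPr w A B := by
  have hcd : Pr w (Bᶜ ∩ A) < Pr w (B ∩ A) := by
    simpa only [compl_compl] using Pr_inter_lt_compl_inter_of_cPr_lt_half w hA h
  have hba : Pr w (B ∩ Aᶜ) < Pr w (Bᶜ ∩ Aᶜ) :=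
    Pr_inter_lt_compl_inter_of_cPr_lt_half w hAc hc
  rw [Set.inter_comm Bᶜ, Set.inter_comm B] at hcd
  rw [Set.inter_comm B, Set.inter_comm Bᶜ] at hba
  rw [cPr, cPr, ← Pr_inter_add_compl_inter w A Bᶜ, ← Pr_inter_add_compl_inter w A B]
  exact div_add_le_div_add ((Pr_nonneg w hw _).trans_lt hba) ((Pr_nonneg w hw _).trans_lt hcd)
    (Pr_nonneg w hw _) (Pr_nonneg w hw _) hba.le hcd.le

end Pr

theorem stmt3_general {Ω : Type} [Fintype Ω] (w : Ω → ℝ) (ty ys : Ω → Fin 2)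
    (hw : ∀ ω, 0 ≤ w ω)
    (hpos : ∀ r c : Fin 2, 0 < Pr w ({ω | ys ω = r} ∩ {ω | ty ω = c}))
    (hn0 : cPr w {ω | ty ω = 0} {ω | ys ω = 1} < 1/2)
    (hn1 : cPr w {ω | ty ω = 1} {ω | ys ω = 0} < 1/2) :
    cPr w {ω | ty ω = 1} {ω | ys ω = 0} * cPr w {ω | ys ω = 0} {ω | ty ω = 0}
      + cPr w {ω | ty ω = 1} {ω | ys ω = 1} * cPr w {ω | ys ω = 1} {ω | ty ω = 0}
    ≤ cPr w {ω | ty ω = 1} {ω | ys ω = 0} * cPr w {ω | ys ω = 0} {ω | ty ω = 1}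
      + cPr w {ω | ty ω = 1} {ω | ys ω = 1} * cPr w {ω | ys ω = 1} {ω | ty ω = 1} := by
  have hys : ∀ r, 0 < Pr w {ω | ys ω = r} := fun r =>
    (hpos r 0).trans_le (Pr_mono w hw Set.inter_subset_left)
  have hty : ∀ c, 0 < Pr w {ω | ty ω = c} := fun c =>
    (hpos 0 c).trans_le (Pr_mono w hw Set.inter_subset_right)
  have hys_compl := compl_setOf_fin_two ys (i := 0) (j := 1) (by decide)
  have hty_compl := compl_setOf_fin_two ty (i := 1) (j := 0) (by decide)
  have hsum_ty : ∀ c, cPr w {ω | ys ω = 0} {ω | ty ω = c} + cPr w {ω | ys ω = 1} {ω | ty ω = c}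
      = 1 := fun c => hys_compl ▸ cPr_add_cPr_compl w _ _ (hty c).ne'
  have hprofile : cPr w {ω | ty ω = 1} {ω | ys ω = 0} ≤ cPr w {ω | ty ω = 1} {ω | ys ω = 1} := by
    have := hty_compl ▸ cPr_add_cPr_compl w {ω | ty ω = 1} _ (hys 1).ne'
    linarith
  have hdom : cPr w {ω | ys ω = 1} {ω | ty ω = 0} ≤ cPr w {ω | ys ω = 1} {ω | ty ω = 1} := by
    have hys1_compl := compl_setOf_fin_two ys (i := 1) (j := 0) (by decide)
    rw [← hty_compl]
    refine cPr_compl_le_cPr_of_cPr_lt_half w hw (hys 1) (hys1_compl ▸ hys 0) ?_ ?_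
    · rwa [hty_compl]
    · rwa [hys1_compl]
  exact two_point_mean_le (hsum_ty 0) (hsum_ty 1) hprofile hdom

/-- Threshold ordering: if both noise rates are below 1/2 then `UB ≤ LB`. -/
theorem stmt3 {Ω : Type} [Fintype Ω] (w : Ω → ℝ) (ty ys : Ω → Fin 2)
    (hw : ∀ ω, 0 ≤ w ω) (hsum : ∑ ω, w ω = 1)
    (hpos : ∀ r c : Fin 2, 0 < Pr w ({ω | ys ω = r} ∩ {ω | ty ω = c}))
    (hn0 : cPr w {ω | ty ω = 0} {ω | ys ω = 1} < 1/2)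
    (hn1 : cPr w {ω | ty ω = 1} {ω | ys ω = 0} < 1/2) :
    cPr w {ω | ty ω = 1} {ω | ys ω = 0} * cPr w {ω | ys ω = 0} {ω | ty ω = 0}
      + cPr w {ω | ty ω = 1} {ω | ys ω = 1} * cPr w {ω | ys ω = 1} {ω | ty ω = 0}
    ≤ cPr w {ω | ty ω = 1} {ω | ys ω = 0} * cPr w {ω | ys ω = 0} {ω | ty ω = 1}
      + cPr w {ω | ty ω = 1} {ω | ys ω = 1} * cPr w {ω | ys ω = 1} {ω | ty ω = 1} :=
  stmt3_general w ty ys hw hpos hn0 hn1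
end

section
/- Let f : {0,1} × G → [0,1] give class- and group-conditional probabilities q(r,k) = P(ỹ=1 | y*=r, g=k) on a finite probability space with all events {y*=r, g=k, ỹ=c} of positive probability, and for each group k define LB_k = Σ_r q(r,k)·P(y*=r | ỹ=1, g=k) and UB_k = Σ_r q(r,k)·P(y*=r | ỹ=0, g=k). If for each group k the noise rates satisfy P(ỹ=0|y*=1,g=k) < 1/2 and P(ỹ=1|y*=0,g=k) < 1/2, then for every group k: q(1,k) ≥ LB_k ≥ UB_k ≥ q(0,k). -/
open Finset

lemma Pr_congr {Ω : Type} [Fintype Ω] (w : Ω → ℝ) {A B : Set Ω}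
    (h : ∀ ω, ω ∈ A ↔ ω ∈ B) : Pr w A = Pr w B := by
  rw [Set.ext h]

lemma Pr_split {Ω : Type} [Fintype Ω] (w : Ω → ℝ) (t : Ω → Fin 2) (S : Set Ω) :
    Pr w S = Pr w (S ∩ {ω | t ω = 0}) + Pr w (S ∩ {ω | t ω = 1}) := by
  unfold Pr
  rw [← Finset.sum_add_distrib]
  apply Finset.sum_congr rfl
  intro ω _
  by_cases hS : ω ∈ S
  · have h2 : t ω = 0 ∨ t ω = 1 := by omega
    rcases h2 with h | h <;>
      simp [Set.indicator_apply, Set.mem_inter_iff, hS, h, Set.mem_setOf_eq]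
  · simp [Set.indicator_apply, Set.mem_inter_iff, hS]

lemma chain_aux (q0 q1 s t b0 b1 : ℝ) (hq : q0 ≤ q1)
    (hs : 0 ≤ s) (ht : 0 ≤ t) (hst : s + t = 1)
    (hb0 : 0 ≤ b0) (hb1 : 0 ≤ b1) (hbb : b0 + b1 = 1)
    (hsb : s ≤ b0) :
    q0 * s + q1 * t ≤ q1 ∧ q0 * b0 + q1 * b1 ≤ q0 * s + q1 * t ∧ q0 ≤ q0 * b0 + q1 * b1 := by
  have ht' : t = 1 - s := by linarith
  have hb' : b1 = 1 - b0 := by linarith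
  subst ht' hb'
  refine ⟨by nlinarith [mul_nonneg hs (sub_nonneg.mpr hq)],
          by nlinarith [mul_nonneg (sub_nonneg.mpr hq) (sub_nonneg.mpr hsb)],
          by nlinarith [mul_nonneg hb1 (sub_nonneg.mpr hq)]⟩

/-- Group-decoupled chain of inequalities underlying Theorem 1: within every
group `k`, `q(1,k) ≥ LB_k ≥ UB_k ≥ q(0,k)`. -/
theorem stmt15 {Ω G : Type} [Fintype Ω] [Fintype G] (w : Ω → ℝ)
    (ty ys : Ω → Fin 2) (g : Ω → G)
    (hw : ∀ ω, 0 ≤ w ω) (hsum : ∑ ω, w ω = 1)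
    (hpos : ∀ (r c : Fin 2) (k : G),
      0 < Pr w ({ω | ys ω = r} ∩ {ω | g ω = k} ∩ {ω | ty ω = c}))
    (q : Fin 2 → G → ℝ)
    (hq : ∀ (r : Fin 2) (k : G),
      q r k = cPr w {ω | ty ω = 1} ({ω | ys ω = r} ∩ {ω | g ω = k}))
    (LB UB : G → ℝ)
    (hLB : ∀ k : G, LB k
      = q 0 k * cPr w {ω | ys ω = 0} ({ω | ty ω = 1} ∩ {ω | g ω = k})
      + q 1 k * cPr w {ω | ys ω = 1} ({ω | ty ω = 1} ∩ {ω | g ω = k}))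
    (hUB : ∀ k : G, UB k
      = q 0 k * cPr w {ω | ys ω = 0} ({ω | ty ω = 0} ∩ {ω | g ω = k})
      + q 1 k * cPr w {ω | ys ω = 1} ({ω | ty ω = 0} ∩ {ω | g ω = k}))
    (hn : ∀ k : G, cPr w {ω | ty ω = 0} ({ω | ys ω = 1} ∩ {ω | g ω = k}) < 1/2 ∧
                   cPr w {ω | ty ω = 1} ({ω | ys ω = 0} ∩ {ω | g ω = k}) < 1/2) :
    ∀ k : G, LB k ≤ q 1 k ∧ UB k ≤ LB k ∧ q 0 k ≤ UB k := by
  intro k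
  set a00 := Pr w ({ω | ys ω = 0} ∩ {ω | g ω = k} ∩ {ω | ty ω = 0}) with ha00
  set a01 := Pr w ({ω | ys ω = 0} ∩ {ω | g ω = k} ∩ {ω | ty ω = 1}) with ha01
  set a10 := Pr w ({ω | ys ω = 1} ∩ {ω | g ω = k} ∩ {ω | ty ω = 0}) with ha10
  set a11 := Pr w ({ω | ys ω = 1} ∩ {ω | g ω = k} ∩ {ω | ty ω = 1}) with ha11
  have p00 := hpos 0 0 k
  have p01 := hpos 0 1 k
  have p10 := hpos 1 0 k
  have p11 := hpos 1 1 k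
  rw [← ha00] at p00; rw [← ha01] at p01; rw [← ha10] at p10; rw [← ha11] at p11
  -- q values
  have hq0 : q 0 k = a01 / (a00 + a01) := by
    rw [hq 0 k]; unfold cPr
    rw [Pr_congr w (A := {ω | ty ω = 1} ∩ ({ω | ys ω = 0} ∩ {ω | g ω = k}))
      (B := {ω | ys ω = 0} ∩ {ω | g ω = k} ∩ {ω | ty ω = 1})
      (by intro ω; simp only [Set.mem_inter_iff, Set.mem_setOf_eq]; tauto)]
    rw [Pr_split w ty ({ω | ys ω = 0} ∩ {ω | g ω = k})]
  have hq1 : q 1 k = a11 / (a10 + a11) := by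
    rw [hq 1 k]; unfold cPr
    rw [Pr_congr w (A := {ω | ty ω = 1} ∩ ({ω | ys ω = 1} ∩ {ω | g ω = k}))
      (B := {ω | ys ω = 1} ∩ {ω | g ω = k} ∩ {ω | ty ω = 1})
      (by intro ω; simp only [Set.mem_inter_iff, Set.mem_setOf_eq]; tauto)]
    rw [Pr_split w ty ({ω | ys ω = 1} ∩ {ω | g ω = k})]
  -- denominators Pr(ty=c ∩ g=k)
  have hd1 : Pr w ({ω | ty ω = 1} ∩ {ω | g ω = k}) = a01 + a11 := by
    rw [Pr_split w ys ({ω | ty ω = 1} ∩ {ω | g ω = k})]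
    rw [Pr_congr w (A := {ω | ty ω = 1} ∩ {ω | g ω = k} ∩ {ω | ys ω = 0})
      (B := {ω | ys ω = 0} ∩ {ω | g ω = k} ∩ {ω | ty ω = 1})
      (by intro ω; simp only [Set.mem_inter_iff, Set.mem_setOf_eq]; tauto)]
    rw [Pr_congr w (A := {ω | ty ω = 1} ∩ {ω | g ω = k} ∩ {ω | ys ω = 1})
      (B := {ω | ys ω = 1} ∩ {ω | g ω = k} ∩ {ω | ty ω = 1})
      (by intro ω; simp only [Set.mem_inter_iff, Set.mem_setOf_eq]; tauto)]
  have hd0 : Pr w ({ω | ty ω = 0} ∩ {ω | g ω = k}) = a00 + a10 := by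
    rw [Pr_split w ys ({ω | ty ω = 0} ∩ {ω | g ω = k})]
    rw [Pr_congr w (A := {ω | ty ω = 0} ∩ {ω | g ω = k} ∩ {ω | ys ω = 0})
      (B := {ω | ys ω = 0} ∩ {ω | g ω = k} ∩ {ω | ty ω = 0})
      (by intro ω; simp only [Set.mem_inter_iff, Set.mem_setOf_eq]; tauto)]
    rw [Pr_congr w (A := {ω | ty ω = 0} ∩ {ω | g ω = k} ∩ {ω | ys ω = 1})
      (B := {ω | ys ω = 1} ∩ {ω | g ω = k} ∩ {ω | ty ω = 0})
      (by intro ω; simp only [Set.mem_inter_iff, Set.mem_setOf_eq]; tauto)]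
  -- the four reverse conditional probabilities
  have hc : ∀ (r c : Fin 2),
      Pr w ({ω | ys ω = r} ∩ ({ω | ty ω = c} ∩ {ω | g ω = k}))
        = Pr w ({ω | ys ω = r} ∩ {ω | g ω = k} ∩ {ω | ty ω = c}) := by
    intro r c
    exact Pr_congr w (by intro ω; simp only [Set.mem_inter_iff, Set.mem_setOf_eq]; tauto)
  have hA0 : cPr w {ω | ys ω = 0} ({ω | ty ω = 1} ∩ {ω | g ω = k}) = a01 / (a01 + a11) := by
    unfold cPr; rw [hc 0 1, hd1, ← ha01]
  have hA1 : cPr w {ω | ys ω = 1} ({ω | ty ω = 1} ∩ {ω | g ω = k}) = a11 / (a01 + a11) := by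
    unfold cPr; rw [hc 1 1, hd1, ← ha11]
  have hB0 : cPr w {ω | ys ω = 0} ({ω | ty ω = 0} ∩ {ω | g ω = k}) = a00 / (a00 + a10) := by
    unfold cPr; rw [hc 0 0, hd0, ← ha00]
  have hB1 : cPr w {ω | ys ω = 1} ({ω | ty ω = 0} ∩ {ω | g ω = k}) = a10 / (a00 + a10) := by
    unfold cPr; rw [hc 1 0, hd0, ← ha10]
  -- noise conditions
  obtain ⟨hn1, hn2⟩ := hn k
  have hn1' : a10 / (a10 + a11) < 1/2 := by
    rw [show cPr w {ω | ty ω = 0} ({ω | ys ω = 1} ∩ {ω | g ω = k})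
        = a10 / (a10 + a11) by
      unfold cPr
      rw [Pr_congr w (A := {ω | ty ω = 0} ∩ ({ω | ys ω = 1} ∩ {ω | g ω = k}))
        (B := {ω | ys ω = 1} ∩ {ω | g ω = k} ∩ {ω | ty ω = 0})
        (by intro ω; simp only [Set.mem_inter_iff, Set.mem_setOf_eq]; tauto)]
      rw [Pr_split w ty ({ω | ys ω = 1} ∩ {ω | g ω = k})]] at hn1
    exact hn1
  have hn2' : a01 / (a00 + a01) < 1/2 := by rw [← hq0]; rw [← hq 0 k] at hn2; exact hn2
  have key1 : a10 < a11 := by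
    rw [div_lt_div_iff₀ (by linarith) (by norm_num)] at hn1'; linarith
  have key2 : a01 < a00 := by
    rw [div_lt_div_iff₀ (by linarith) (by norm_num)] at hn2'; linarith
  -- abbreviations
  have hq01 : q 0 k ≤ q 1 k := by
    rw [hq0, hq1]
    have h2 : (1:ℝ)/2 < a11 / (a10 + a11) := by
      rw [div_lt_div_iff₀ (by norm_num) (by linarith)]; linarith
    linarith
  have hsA : a01 / (a01 + a11) + a11 / (a01 + a11) = 1 := by field_simp
  have hsB : a00 / (a00 + a10) + a10 / (a00 + a10) = 1 := by field_simp
  have hAle : a01 / (a01 + a11) ≤ a00 / (a00 + a10) := by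
    rw [div_le_div_iff₀ (by linarith) (by linarith)]
    nlinarith
  have hA0nn : 0 ≤ a01 / (a01 + a11) := by positivity
  have hA1nn : 0 ≤ a11 / (a01 + a11) := by positivity
  have hB0nn : 0 ≤ a00 / (a00 + a10) := by positivity
  have hB1nn : 0 ≤ a10 / (a00 + a10) := by positivity
  rw [hLB k, hUB k, hA0, hA1, hB0, hB1]
  exact chain_aux _ _ _ _ _ _ hq01 hA0nn hA1nn hsA hB0nn hB1nn hsB hAle
end
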